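/- arXiv:1401.6497 — 2 statements merged into one kernel-verified Lean document; each statement's English description precedes it below -/
import Mathlib

section
/- Let (Ω, F, P) be a probability space and for each n = 1,...,N let A^(n) : Ω → ℝ^{I_n × R} be a random matrix with rows a^(n)_{i_n} : Ω → ℝ^R, where the collection of all row vectors is mutually independent and every entry is square-integrable. Let O be a deterministic N-th order tensor of size I_1 × ··· × I_N with entries in {0,1}. Then E[‖O ⊛ [[A^(1),...,A^(N)]]‖_F²] = Σ_{i_1,...,i_N} O_{i_1...i_N} ⟨E[a^(1)_{i_1} a^(1)T_{i_1}], ..., E[a^(N)_{i_N} a^(N)T_{i_N}]⟩, where ⟨·,...,·⟩ is the generalized inner product of R × R matrices. -/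
open scoped BigOperators Matrix
open Finset Matrix MeasureTheory ProbabilityTheory

/-- Outer product of `N` vectors, as a tensor indexed by multi-indices. -/
def outerProd {ι : Type*} [Fintype ι] {I : ι → ℕ}
    (u : (n : ι) → Fin (I n) → ℝ) : ((n : ι) → Fin (I n)) → ℝ :=
  fun i => ∏ n, u n (i n)

/-- Kruskal operator: the tensor `[[A⁽¹⁾, …, A⁽ᴺ⁾]] = ∑ᵣ a⁽¹⁾₊ᵣ ∘ ⋯ ∘ a⁽ᴺ⁾₊ᵣ`. -/
def kruskal {ι : Type*} [Fintype ι] {I : ι → ℕ} {R : ℕ}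
    (A : (n : ι) → Matrix (Fin (I n)) (Fin R) ℝ) : ((n : ι) → Fin (I n)) → ℝ :=
  ∑ r : Fin R, outerProd (fun n iₙ => A n iₙ r)

/-!
Expanding the square of an entry of the Kruskal tensor gives
`∑ r s, ∏ n, A⁽ⁿ⁾(iₙ, r) A⁽ⁿ⁾(iₙ, s)`. For a fixed multi-index the rows `a⁽ⁿ⁾_{iₙ}` come from
different factors, hence are independent, so each product has expectation
`∏ n, E[A⁽ⁿ⁾(iₙ, r) A⁽ⁿ⁾(iₙ, s)]`; the mask drops out because `O² = O` for a 0/1 tensor.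
-/

lemma ProbabilityTheory.iIndepFun.integrable_finsetProd {ι Ω : Type*} [MeasurableSpace Ω]
    {μ : Measure Ω} {f : ι → Ω → ℝ} (hf : iIndepFun f μ) (hint : ∀ i, Integrable (f i) μ)
    (s : Finset ι) :
    Integrable (fun ω => ∏ i ∈ s, f i ω) μ := by
  induction s using Finset.cons_induction with
  | empty =>
    have := hf.isProbabilityMeasure
    simp
  | cons a s ha ih =>
    have hindep : IndepFun (∏ j ∈ s, f j) (f a) μ :=
      hf.indepFun_finsetProd_of_notMem₀ (fun i => (hint i).aemeasurable) ha
    refine (hindep.integrable_mul (by simpa only [← Finset.prod_apply] using ih) (hint a)).congr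
      (ae_of_all _ fun ω => ?_)
    simp only [Pi.mul_apply, Finset.prod_apply, Finset.prod_cons, mul_comm]

section Kruskal

variable {ι Ω : Type*} {I : ι → ℕ} {R : ℕ} [MeasurableSpace Ω] {μ : Measure Ω}
  {A : (n : ι) → Ω → Matrix (Fin (I n)) (Fin R) ℝ} {i : (n : ι) → Fin (I n)}

lemma ProbabilityTheory.iIndepFun.entry_mul_entry
    (hindep : iIndepFun (fun n ω => A n ω (i n)) μ) (r s : Fin R) :
    iIndepFun (fun n ω => A n ω (i n) r * A n ω (i n) s) μ :=
  hindep.comp (fun _ v => v r * v s)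
    (fun _ => (measurable_pi_apply r).mul (measurable_pi_apply s))

lemma integrable_entry_mul_entry (hL2 : ∀ n r, MemLp (fun ω => A n ω (i n) r) 2 μ)
    (n : ι) (r s : Fin R) :
    Integrable (fun ω => A n ω (i n) r * A n ω (i n) s) μ :=
  (hL2 n r).integrable_mul (hL2 n s)

variable [Fintype ι]

lemma kruskal_sq (B : (n : ι) → Matrix (Fin (I n)) (Fin R) ℝ) (j : (n : ι) → Fin (I n)) :
    kruskal B j ^ 2 = ∑ r, ∑ s, ∏ n, B n (j n) r * B n (j n) s := by
  simp only [kruskal, outerProd, Finset.sum_apply, sq, Finset.sum_mul_sum,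
    Finset.prod_mul_distrib]

lemma integrable_prod_entry_mul_entry (hindep : iIndepFun (fun n ω => A n ω (i n)) μ)
    (hL2 : ∀ n r, MemLp (fun ω => A n ω (i n) r) 2 μ) (r s : Fin R) :
    Integrable (fun ω => ∏ n, A n ω (i n) r * A n ω (i n) s) μ :=
  (hindep.entry_mul_entry r s).integrable_finsetProd (integrable_entry_mul_entry hL2 · r s) _

lemma integrable_kruskal_sq (hindep : iIndepFun (fun n ω => A n ω (i n)) μ)
    (hL2 : ∀ n r, MemLp (fun ω => A n ω (i n) r) 2 μ) :
    Integrable (fun ω => kruskal (fun n => A n ω) i ^ 2) μ := by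
  simp only [kruskal_sq]
  exact integrable_finsetSum _ fun r _ => integrable_finsetSum _ fun s _ =>
    integrable_prod_entry_mul_entry hindep hL2 r s

lemma integral_kruskal_sq (hindep : iIndepFun (fun n ω => A n ω (i n)) μ)
    (hL2 : ∀ n r, MemLp (fun ω => A n ω (i n) r) 2 μ) :
    ∫ ω, kruskal (fun n => A n ω) i ^ 2 ∂μ
      = ∑ r, ∑ s, ∏ n, ∫ ω, A n ω (i n) r * A n ω (i n) s ∂μ := by
  have hprod := integrable_prod_entry_mul_entry hindep hL2
  simp only [kruskal_sq]
  rw [integral_finsetSum _ fun r _ => integrable_finsetSum _ fun s _ => hprod r s]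
  refine Finset.sum_congr rfl fun r _ => ?_
  rw [integral_finsetSum _ fun s _ => hprod r s]
  exact Finset.sum_congr rfl fun s _ =>
    (hindep.entry_mul_entry r s).integral_fun_prod_eq_prod_integral
      fun n => (integrable_entry_mul_entry hL2 n r s).aestronglyMeasurable

end Kruskal

theorem stmt12_general {N R : ℕ} {I : Fin N → ℕ}
    {Ω : Type*} [MeasurableSpace Ω] (P : Measure Ω)
    (A : (n : Fin N) → Ω → Matrix (Fin (I n)) (Fin R) ℝ)
    (hindep : iIndepFun
      (fun p : Σ n : Fin N, Fin (I n) => fun ω => A p.1 ω p.2) P)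
    (hL2 : ∀ n (i : Fin (I n)) (r : Fin R), MemLp (fun ω => A n ω i r) 2 P)
    (O : ((n : Fin N) → Fin (I n)) → ℝ)
    (hO : ∀ i, O i = 0 ∨ O i = 1) :
    (∫ ω, ∑ i : (n : Fin N) → Fin (I n),
        (O i * kruskal (fun n => A n ω) i) ^ 2 ∂P)
      = ∑ i : (n : Fin N) → Fin (I n),
          O i * ∑ r : Fin R, ∑ s : Fin R,
            ∏ n, ∫ ω, A n ω (i n) r * A n ω (i n) s ∂P := by
  have hrows (i : (n : Fin N) → Fin (I n)) : iIndepFun (fun n ω => A n ω (i n)) P :=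
    hindep.precomp (g := fun n => ⟨n, i n⟩) fun _ _ h => congrArg Sigma.fst h
  have hO_sq (i : (n : Fin N) → Fin (I n)) : O i ^ 2 = O i := by
    rcases hO i with h | h <;> simp [h]
  simp only [mul_pow, hO_sq]
  rw [integral_finsetSum _ fun i _ => (integrable_kruskal_sq (hrows i) (hL2 · _)).const_mul _]
  refine Finset.sum_congr rfl fun i _ => ?_
  rw [integral_const_mul, integral_kruskal_sq (hrows i) (hL2 · _)]

theorem stmt12 {N R : ℕ} {I : Fin N → ℕ}
    {Ω : Type*} [MeasurableSpace Ω] (P : Measure Ω) [IsProbabilityMeasure P]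
    (A : (n : Fin N) → Ω → Matrix (Fin (I n)) (Fin R) ℝ)
    (hmeas : ∀ n (i : Fin (I n)), Measurable (fun ω => A n ω i))
    (hindep : iIndepFun
      (fun p : Σ n : Fin N, Fin (I n) => fun ω => A p.1 ω p.2) P)
    (hL2 : ∀ n (i : Fin (I n)) (r : Fin R), MemLp (fun ω => A n ω i r) 2 P)
    (O : ((n : Fin N) → Fin (I n)) → ℝ)
    (hO : ∀ i, O i = 0 ∨ O i = 1) :
    (∫ ω, ∑ i : (n : Fin N) → Fin (I n),
        (O i * kruskal (fun n => A n ω) i) ^ 2 ∂P)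
      = ∑ i : (n : Fin N) → Fin (I n),
          O i * ∑ r : Fin R, ∑ s : Fin R,
            ∏ n, ∫ ω, A n ω (i n) r * A n ω (i n) s ∂P :=
  stmt12_general P A hindep hL2 O hO
end

section
/- Let A^(1), ..., A^(N) be matrices with A^(n) of size I_n × R. Then the squared Frobenius norm of the Kruskal tensor admits the closed form ‖[[A^(1),...,A^(N)]]‖_F² = 1_R^T (⊛_n (A^(n)T A^(n))) 1_R = Σ_{r=1}^R Σ_{s=1}^R ∏_{n=1}^N (A^(n)T A^(n))_{r s}, i.e., it equals the generalized inner product ⟨A^(1)T A^(1), ..., A^(N)T A^(N)⟩ of the N Gram matrices. -/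
open scoped BigOperators Matrix
open Finset Matrix

/-- Iterated Hadamard (entrywise) product of a family of matrices. -/
def hadPi {ι : Type*} [Fintype ι] {α β : Type*}
    (M : ι → Matrix α β ℝ) : Matrix α β ℝ :=
  fun a b => ∏ n, M n a b

section Kruskal

variable {ι : Type*} [Fintype ι] {I : ι → ℕ} {R : ℕ}

lemma kruskal_apply (A : (n : ι) → Matrix (Fin (I n)) (Fin R) ℝ) (i : (n : ι) → Fin (I n)) :
    kruskal A i = ∑ r, ∏ n, A n (i n) r := by
  simp only [kruskal, outerProd, Finset.sum_apply]

lemma kruskal_apply_sq (A : (n : ι) → Matrix (Fin (I n)) (Fin R) ℝ) (i : (n : ι) → Fin (I n)) :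
    kruskal A i ^ 2 = ∑ r, ∑ s, ∏ n, A n (i n) r * A n (i n) s := by
  simp only [kruskal_apply, sq, Finset.sum_mul_sum, ← Finset.prod_mul_distrib]

lemma transpose_mul_self_apply {α m k : Type*} [Fintype m] [NonUnitalNonAssocSemiring α]
    (B : Matrix m k α) (r s : k) : (Bᵀ * B) r s = ∑ x, B x r * B x s := by
  simp only [mul_apply, transpose_apply]

/-- Expanding each Gram entry as a sum over the row index `iₙ` and multiplying out the product
over `n` turns the right-hand side into a sum over all multi-indices. -/
theorem sum_kruskal_sq [DecidableEq ι] (A : (n : ι) → Matrix (Fin (I n)) (Fin R) ℝ) :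
    ∑ i, kruskal A i ^ 2 = ∑ r, ∑ s, ∏ n, ((A n)ᵀ * A n) r s := by
  simp_rw [kruskal_apply_sq, transpose_mul_self_apply, Fintype.prod_sum]
  rw [Finset.sum_comm]
  exact Finset.sum_congr rfl fun r _ => Finset.sum_comm

end Kruskal

lemma one_dotProduct_mulVec_one {α m k : Type*} [Fintype m] [Fintype k] [NonAssocSemiring α]
    (M : Matrix m k α) : 1 ⬝ᵥ (M *ᵥ 1) = ∑ r, ∑ s, M r s := by
  simp only [one_dotProduct, mulVec, dotProduct_one]

theorem stmt16 {N R : ℕ} {I : Fin N → ℕ}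
    (A : (n : Fin N) → Matrix (Fin (I n)) (Fin R) ℝ) :
    (∑ i : (n : Fin N) → Fin (I n), kruskal A i ^ 2)
        = dotProduct (fun _ => (1 : ℝ))
            ((hadPi (fun n => (A n)ᵀ * A n)).mulVec (fun _ => (1 : ℝ)))
    ∧ (∑ i : (n : Fin N) → Fin (I n), kruskal A i ^ 2)
        = ∑ r : Fin R, ∑ s : Fin R, ∏ n, ((A n)ᵀ * A n) r s :=
  ⟨(sum_kruskal_sq A).trans (one_dotProduct_mulVec_one _).symm, sum_kruskal_sq A⟩
end
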